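/- For the signals u₁(t) = b₁(cos(η²t) − 1)/η and u₂(t) = b₂ sin(η²t)/η, the Lévy-area type integral ∫ₛᵗ (u₁(τ) − u₁(s)) u₂'(τ) dτ converges to (b₁b₂/2)(t − s) as η → ∞, for every 0 ≤ s ≤ t. -/
import Mathlib

open Real Filter intervalIntegral

lemma int_cos_sq (a s t : ℝ) (ha : a ≠ 0) :
    ∫ τ in s..t, Real.cos (a * τ) ^ 2
      = a⁻¹ * ((Real.cos (a*t) * Real.sin (a*t) - Real.cos (a*s) * Real.sin (a*s) + a*t - a*s) / 2) := by
  have := intervalIntegral.integral_comp_mul_left (fun x => Real.cos x ^ 2) ha (a := s) (b := t)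
  rw [this, integral_cos_sq]; simp [smul_eq_mul]

lemma int_cos (a s t : ℝ) (ha : a ≠ 0) :
    ∫ τ in s..t, Real.cos (a * τ)
      = a⁻¹ * (Real.sin (a*t) - Real.sin (a*s)) := by
  have := intervalIntegral.integral_comp_mul_left (fun x => Real.cos x) ha (a := s) (b := t)
  rw [this, integral_cos]; simp [smul_eq_mul]

set_option maxHeartbeats 1000000 in
/-- the Lévy-area type integral ∫ₛᵗ (u₁(τ) − u₁(s)) u₂'(τ) dτ,
with u₁(τ) = b₁(cos(η²τ)−1)/η and u₂'(τ) = b₂ η cos(η²τ), converges to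
(b₁b₂/2)(t − s) as η → ∞. -/
theorem stmt1 (b₁ b₂ s t : ℝ) (hs : 0 ≤ s) (hst : s ≤ t) :
    Tendsto
      (fun (η : ℕ) =>
        ∫ τ in s..t,
          (b₁ * (Real.cos ((η : ℝ) ^ 2 * τ) - 1) / η
            - b₁ * (Real.cos ((η : ℝ) ^ 2 * s) - 1) / η)
          * (b₂ * η * Real.cos ((η : ℝ) ^ 2 * τ)))
      atTop (nhds (b₁ * b₂ / 2 * (t - s))) := by
  have key : ∀ (η : ℕ), η ≠ 0 →
      (∫ τ in s..t,
          (b₁ * (Real.cos ((η : ℝ) ^ 2 * τ) - 1) / η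
            - b₁ * (Real.cos ((η : ℝ) ^ 2 * s) - 1) / η)
          * (b₂ * η * Real.cos ((η : ℝ) ^ 2 * τ)))
      = b₁ * b₂ / 2 * (t - s)
        + b₁ * b₂ * (((η : ℝ) ^ 2)⁻¹ *
          ((Real.cos ((η:ℝ)^2*t) * Real.sin ((η:ℝ)^2*t)
            - Real.cos ((η:ℝ)^2*s) * Real.sin ((η:ℝ)^2*s)) / 2
          - Real.cos ((η:ℝ)^2*s) * (Real.sin ((η:ℝ)^2*t) - Real.sin ((η:ℝ)^2*s)))) := by
    intro η hη
    have hη' : (η : ℝ) ≠ 0 := Nat.cast_ne_zero.mpr hη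
    have ha : ((η : ℝ) ^ 2) ≠ 0 := pow_ne_zero 2 hη'
    set a : ℝ := (η : ℝ) ^ 2 with hadef
    have hcongr : (∫ τ in s..t,
          (b₁ * (Real.cos (a * τ) - 1) / η - b₁ * (Real.cos (a * s) - 1) / η)
          * (b₂ * η * Real.cos (a * τ)))
        = ∫ τ in s..t,
            (b₁ * b₂ * Real.cos (a * τ) ^ 2 - b₁ * b₂ * Real.cos (a * s) * Real.cos (a * τ)) := by
      apply intervalIntegral.integral_congr
      intro τ _
      field_simp
      ring
    rw [hcongr]
    have h1 : IntervalIntegrable (fun τ => b₁ * b₂ * Real.cos (a * τ) ^ 2) MeasureTheory.volume s t :=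
      (Continuous.intervalIntegrable (by continuity) _ _)
    have h2 : IntervalIntegrable (fun τ => b₁ * b₂ * Real.cos (a * s) * Real.cos (a * τ)) MeasureTheory.volume s t :=
      (Continuous.intervalIntegrable (by continuity) _ _)
    rw [intervalIntegral.integral_sub h1 h2, intervalIntegral.integral_const_mul,
      intervalIntegral.integral_const_mul, int_cos_sq a s t ha, int_cos a s t ha]
    field_simp
    ring
  have hlim : Tendsto (fun (η : ℕ) =>
      b₁ * b₂ * (((η : ℝ) ^ 2)⁻¹ *
          ((Real.cos ((η:ℝ)^2*t) * Real.sin ((η:ℝ)^2*t)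
            - Real.cos ((η:ℝ)^2*s) * Real.sin ((η:ℝ)^2*s)) / 2
          - Real.cos ((η:ℝ)^2*s) * (Real.sin ((η:ℝ)^2*t) - Real.sin ((η:ℝ)^2*s)))))
      atTop (nhds 0) := by
    have hg : Tendsto (fun (η : ℕ) => |b₁ * b₂| * (((η : ℝ) ^ 2)⁻¹ * 3)) atTop (nhds 0) := by
      have h0 : Tendsto (fun (η : ℕ) => ((η : ℝ) ^ 2)⁻¹) atTop (nhds 0) := by
        apply Tendsto.inv_tendsto_atTop
        exact (tendsto_pow_atTop (two_ne_zero)).comp (tendsto_natCast_atTop_atTop (R := ℝ))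
      have := (h0.mul_const 3).const_mul (|b₁ * b₂|)
      simpa using this
    refine squeeze_zero_norm' ?_ hg
    · filter_upwards [eventually_ge_atTop 1] with η hη
      have hη' : (0:ℝ) < (η : ℝ) ^ 2 := by positivity
      rw [Real.norm_eq_abs, abs_mul, abs_mul (((η:ℝ)^2)⁻¹), abs_of_pos (inv_pos.mpr hη')]
      gcongr
      set X := Real.cos ((η:ℝ)^2*t) * Real.sin ((η:ℝ)^2*t)
        - Real.cos ((η:ℝ)^2*s) * Real.sin ((η:ℝ)^2*s) with hX
      set Y := Real.cos ((η:ℝ)^2*s) * (Real.sin ((η:ℝ)^2*t) - Real.sin ((η:ℝ)^2*s)) with hY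
      have h1 : |Real.cos ((η:ℝ)^2*t) * Real.sin ((η:ℝ)^2*t)| ≤ 1 := by
        rw [abs_mul]
        exact mul_le_one₀ (Real.abs_cos_le_one _) (abs_nonneg _) (Real.abs_sin_le_one _)
      have h2 : |Real.cos ((η:ℝ)^2*s) * Real.sin ((η:ℝ)^2*s)| ≤ 1 := by
        rw [abs_mul]
        exact mul_le_one₀ (Real.abs_cos_le_one _) (abs_nonneg _) (Real.abs_sin_le_one _)
      have bX : |X| ≤ 2 := by
        have := abs_sub (Real.cos ((η:ℝ)^2*t) * Real.sin ((η:ℝ)^2*t))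
          (Real.cos ((η:ℝ)^2*s) * Real.sin ((η:ℝ)^2*s))
        rw [hX]; linarith
      have bY : |Y| ≤ 2 := by
        rw [hY, abs_mul]
        have := abs_sub (Real.sin ((η:ℝ)^2*t)) (Real.sin ((η:ℝ)^2*s))
        have h3 := Real.abs_sin_le_one ((η:ℝ)^2*t)
        have h4 := Real.abs_sin_le_one ((η:ℝ)^2*s)
        have h5 := Real.abs_cos_le_one ((η:ℝ)^2*s)
        have h6 : |Real.sin ((η:ℝ)^2*t) - Real.sin ((η:ℝ)^2*s)| ≤ 2 := by linarith
        calc _ ≤ 1 * 2 := mul_le_mul h5 h6 (abs_nonneg _) zero_le_one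
          _ = 2 := by norm_num
      have bX2 : |X / 2| ≤ 1 := by
        rw [abs_div, abs_two]; linarith
      have := abs_sub (X / 2) Y
      linarith
  have : Tendsto (fun (η : ℕ) =>
      b₁ * b₂ / 2 * (t - s)
        + b₁ * b₂ * (((η : ℝ) ^ 2)⁻¹ *
          ((Real.cos ((η:ℝ)^2*t) * Real.sin ((η:ℝ)^2*t)
            - Real.cos ((η:ℝ)^2*s) * Real.sin ((η:ℝ)^2*s)) / 2
          - Real.cos ((η:ℝ)^2*s) * (Real.sin ((η:ℝ)^2*t) - Real.sin ((η:ℝ)^2*s)))))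
      atTop (nhds (b₁ * b₂ / 2 * (t - s))) := by
    simpa using (tendsto_const_nhds.add hlim)
  apply this.congr'
  filter_upwards [eventually_ge_atTop 1] with η hη
  exact (key η (by omega)).symm
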